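/- Let X and Y be finite T₀-spaces with Y connected and X non-empty, and let f : X → Y be a continuous map. Then f is a Hurewicz cofibration if and only if f is a homeomorphism onto its image f(X) and f(X) is a dbp–retract of Y. -/

import Mathlib

open unitInterval

set_option autoImplicit false

universe u v

/-- The specialization preorder: `x ≤ y` iff every open set containing `y` contains `x`. -/
def specLE {X : Type*} [TopologicalSpace X] (x y : X) : Prop :=
  ∀ U : Set X, IsOpen U → y ∈ U → x ∈ U

/-- A continuous map `i : A → X` is a (Hurewicz) cofibration iff it has the homotopy
extension property with respect to all topological spaces. -/
def IsCofibration {A : Type*} {X : Type*} [TopologicalSpace A] [TopologicalSpace X]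
    (i : C(A, X)) : Prop :=
  ∀ (Z : Type v) [TopologicalSpace Z] (f : C(X, Z)) (H : C(A × I, Z)),
    (∀ a, H (a, 0) = f (i a)) →
    ∃ G : C(X × I, Z),
      (∀ x, G (x, 0) = f x) ∧ ∀ a t, G (i a, t) = H (a, t)

/-- `x` is a down beat point of the subspace `S`:
the set of points of `S` strictly below `x` has a maximum. -/
def IsDownBeatPoint {X : Type*} [TopologicalSpace X] (S : Set X) (x : X) : Prop :=
  x ∈ S ∧ ∃ m ∈ S, m ≠ x ∧ specLE m x ∧
    ∀ z ∈ S, z ≠ x → specLE z x → specLE z m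

/-- `T` is a dbp–retract of `S`: `T` is obtained from `S` by successively
removing down beat points. -/
inductive IsDbpRetract {X : Type*} [TopologicalSpace X] : Set X → Set X → Prop
  | refl (S : Set X) : IsDbpRetract S S
  | step {S T : Set X} (x : X) (hx : IsDownBeatPoint S x)
      (h : IsDbpRetract (S \ {x}) T) : IsDbpRetract S T

/-- The minimal open set containing `x` (in a finite space): the intersection of all
open sets containing `x`. -/
def minOpen {X : Type*} [TopologicalSpace X] (x : X) : Set X :=
  ⋂₀ {U : Set X | IsOpen U ∧ x ∈ U}

/-!
In a finite space continuity is monotonicity for the specialization order, and removing down beat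
points of `Y` one at a time until `A` is left amounts to a monotone retraction `r : Y → A` with
`r y ≤ y` for all `y`: a down beat point is sent to the maximum below it, and conversely a point
of `Y \ A` that is minimal for the specialization order is a down beat point, with `r` of it as
the maximum below it.

Given such an `r` onto `f(X)`, a homotopy `H` on `X` starting at `g ∘ f` extends to
`G (y, t) = H (f⁻¹ (r y), t)` for `t > 0` and `G (y, 0) = g y`. This `G` is continuous
although it jumps at `t = 0`, because the jump goes from `g (r y)` up to `g y`.

Conversely, testing the homotopy extension property against the Sierpiński space shows that `f`
is an embedding, and testing it against `Y × {0} ∪ f(X) × I` gives a retraction `R` of `Y × I`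
onto that subspace. The height of `R (y, t)` is locally constant in `y`, hence equal to `t` on
the connected space `Y`, and for small `t > 0` the map `y ↦ (R (y, t)).1` is a retraction onto
`f(X)` below the identity.
-/

open Topology Filter Set

lemma specLE_iff_specializes {X : Type*} [TopologicalSpace X] {x y : X} :
    specLE x y ↔ x ⤳ y :=
  specializes_iff_forall_open.symm

section AlexandrovDiscrete

variable {α β : Type*} [TopologicalSpace α] [TopologicalSpace β] [AlexandrovDiscrete α]

lemma eventually_specializes_nhds (a : α) : ∀ᶠ x in 𝓝 a, x ⤳ a :=
  mem_of_superset (isOpen_nhdsKer.mem_nhds (subset_nhdsKer (mem_singleton a)))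
    fun _ => mem_nhdsKer_singleton.1

lemma continuous_of_specializes_map {g : α → β} (h : ∀ x y, x ⤳ y → g x ⤳ g y) :
    Continuous g :=
  continuous_def.2 fun _ hs =>
    isOpen_iff_forall_specializes.2 fun x y hxy hy => (h x y hxy).mem_open hs hy

lemma Continuous.isLocallyConstant_of_t1Space [T1Space β] {g : α → β} (hg : Continuous g) :
    IsLocallyConstant g :=
  (IsLocallyConstant.iff_eventually_eq g).2 fun a =>
    (eventually_specializes_nhds a).mono fun _ hx => (hx.map hg).eq

end AlexandrovDiscrete

lemma Continuous.of_specializes_on_isClosed {P Z : Type*} [TopologicalSpace P]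
    [TopologicalSpace Z] {C : Set P} {F G : P → Z} (hC : IsClosed C) (hF : Continuous F)
    (hG : ContinuousOn G C) (hGF : EqOn G F Cᶜ) (hFG : ∀ p ∈ C, F p ⤳ G p) :
    Continuous G := by
  refine continuous_iff_continuousAt.2 fun p => ?_
  by_cases hp : p ∈ C
  · have hout : ContinuousWithinAt G Cᶜ p :=
      ((hF.tendsto p).mono_left nhdsWithin_le_nhds |>.congr'
        (eventuallyEq_nhdsWithin_of_eqOn hGF).symm).mono_right (hFG p hp).nhds_le_nhds
    simpa only [union_compl_self, continuousWithinAt_univ] using (hG p hp).union hout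
  · exact hF.continuousAt.congr (mem_of_superset (hC.isOpen_compl.mem_nhds hp) fun _ hq =>
      (hGF hq).symm)

section DbpRetract

variable {Y : Type*} [TopologicalSpace Y]

structure IsLowerRetraction (S T : Set Y) (r : Y → Y) : Prop where
  subset : T ⊆ S
  mapsTo : MapsTo r S T
  eqOn : EqOn r id T
  specializes : ∀ y ∈ S, r y ⤳ y
  monotoneOn : ∀ y ∈ S, ∀ z ∈ S, y ⤳ z → r y ⤳ r z

namespace IsLowerRetraction

lemma refl (S : Set Y) : IsLowerRetraction S S id :=
  ⟨subset_rfl, mapsTo_id S, eqOn_refl id S, fun _ _ => specializes_rfl, fun _ _ _ _ h => h⟩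

lemma comp {S S' T : Set Y} {r₁ r₂ : Y → Y} (h₂ : IsLowerRetraction S' T r₂)
    (h₁ : IsLowerRetraction S S' r₁) : IsLowerRetraction S T (r₂ ∘ r₁) where
  subset := h₂.subset.trans h₁.subset
  mapsTo := h₂.mapsTo.comp h₁.mapsTo
  eqOn t ht := by
    simp only [Function.comp_apply, h₁.eqOn (h₂.subset ht), id, h₂.eqOn ht]
  specializes y hy := (h₂.specializes _ (h₁.mapsTo hy)).trans (h₁.specializes y hy)
  monotoneOn y hy z hz hyz :=
    h₂.monotoneOn _ (h₁.mapsTo hy) _ (h₁.mapsTo hz) (h₁.monotoneOn y hy z hz hyz)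

lemma restrict {S S' T : Set Y} {r : Y → Y} (h : IsLowerRetraction S T r) (hTS' : T ⊆ S')
    (hS'S : S' ⊆ S) : IsLowerRetraction S' T r :=
  ⟨hTS', h.mapsTo.mono_left hS'S, h.eqOn, fun y hy => h.specializes y (hS'S hy),
    fun y hy z hz => h.monotoneOn y (hS'S hy) z (hS'S hz)⟩

end IsLowerRetraction

lemma IsDownBeatPoint.exists_isLowerRetraction {S : Set Y} {x : Y} (hx : IsDownBeatPoint S x) :
    ∃ r, IsLowerRetraction S (S \ {x}) r := by
  classical
  obtain ⟨-, m, hmS, hmx, hm, hmax⟩ := hx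
  simp only [specLE_iff_specializes] at hm hmax
  refine ⟨Function.update id x m, sdiff_subset, fun y hy => ?_, fun y hy => ?_, fun y _ => ?_,
    fun y hy z hz hyz => ?_⟩ <;> simp only [Function.update_apply, id]
  · split_ifs with hyx
    · exact ⟨hmS, hmx⟩
    · exact ⟨hy, hyx⟩
  · exact if_neg hy.2
  · split_ifs with hyx
    · exact hyx ▸ hm
    · rfl
  · split_ifs with hyx hzx hzx
    · rfl
    · exact hm.trans (hyx ▸ hyz)
    · exact hmax y hy hyx (hzx ▸ hyz)
    · exact hyz

lemma IsDbpRetract.exists_isLowerRetraction {S T : Set Y} (h : IsDbpRetract S T) :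
    ∃ r, IsLowerRetraction S T r := by
  induction h with
  | refl S => exact ⟨id, .refl S⟩
  | step x hx _ ih =>
    obtain ⟨r₁, h₁⟩ := hx.exists_isLowerRetraction
    obtain ⟨r₂, h₂⟩ := ih
    exact ⟨r₂ ∘ r₁, h₂.comp h₁⟩

lemma exists_forall_specializes_eq [Finite Y] [T0Space Y] {B : Set Y} (hB : B.Nonempty) :
    ∃ x ∈ B, ∀ z ∈ B, z ⤳ x → z = x := by
  obtain ⟨x, hxB, hmax⟩ :=
    B.toFinite.exists_maximalFor (Specialization.toEquiv : Y → Specialization Y) B hB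
  exact ⟨x, hxB, fun z hz hzx => (hzx.antisymm (hmax hz hzx)).eq⟩

lemma IsLowerRetraction.isDownBeatPoint [T0Space Y] {S T : Set Y} {r : Y → Y}
    (h : IsLowerRetraction S T r) {x : Y} (hx : x ∈ S \ T)
    (hmin : ∀ z ∈ S \ T, z ⤳ x → z = x) : IsDownBeatPoint S x := by
  simp only [IsDownBeatPoint, specLE_iff_specializes]
  refine ⟨hx.1, r x, h.subset (h.mapsTo hx.1), fun hrx => hx.2 (hrx ▸ h.mapsTo hx.1),
    h.specializes x hx.1, fun z hz hzx hzle => ?_⟩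
  have hzT : z ∈ T := by_contra fun hzT => hzx (hmin z ⟨hz, hzT⟩ hzle)
  simpa [h.eqOn hzT] using h.monotoneOn z hz x hx.1 hzle

theorem IsLowerRetraction.isDbpRetract [Finite Y] [T0Space Y] {S T : Set Y} {r : Y → Y}
    (h : IsLowerRetraction S T r) : IsDbpRetract S T := by
  rcases (S \ T).eq_empty_or_nonempty with hST | hST
  · rw [subset_antisymm (sdiff_eq_empty.1 hST) h.subset]
    exact .refl T
  obtain ⟨x, hx, hmin⟩ := exists_forall_specializes_eq hST
  have hTS' : T ⊆ S \ {x} := fun t ht => ⟨h.subset ht, fun htx => hx.2 (htx ▸ ht)⟩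
  have : ((S \ {x}) \ T).ncard < (S \ T).ncard := by
    rw [sdiff_sdiff_comm]
    exact ncard_sdiff_singleton_lt_of_mem hx
  exact .step x (h.isDownBeatPoint hx hmin) (h.restrict hTS' sdiff_subset).isDbpRetract
termination_by (S \ T).ncard

end DbpRetract

section Cofibration

variable {A B : Type*} [TopologicalSpace A] [TopologicalSpace B] {i : C(A, B)}

lemma IsCofibration.homotopyExtension (hi : IsCofibration.{v} i) (Z : Type*)
    [TopologicalSpace Z] [Small.{v} Z] (g : C(B, Z)) (H : C(A × I, Z))
    (hH : ∀ a, H (a, 0) = g (i a)) :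
    ∃ G : C(B × I, Z), (∀ b, G (b, 0) = g b) ∧ ∀ a t, G (i a, t) = H (a, t) := by
  let e := Shrink.homeomorph.{v} Z
  obtain ⟨G, hG0, hGi⟩ := hi (Shrink.{v} Z) ((e : C(Z, Shrink Z)).comp g)
    ((e : C(Z, Shrink Z)).comp H) (by simp [hH])
  exact ⟨(e.symm : C(Shrink Z, Z)).comp G, fun b => by simp [hG0], fun a t => by simp [hGi]⟩

/-- Extend the homotopy `(a, t) ↦ (a ∈ U ∧ t ≠ 0)` into the Sierpiński space; its end
`{b | G (b, 1)}` is an open set of `B` pulling back to `U`. -/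
lemma IsCofibration.isInducing (hi : IsCofibration.{v} i) : IsInducing i := by
  refine ⟨le_antisymm i.continuous.le_induced fun U hU => ?_⟩
  have hH : Continuous fun p : A × I => p.1 ∈ U ∧ p.2 ≠ 0 :=
    continuous_Prop.2 (hU.prod isOpen_ne)
  obtain ⟨G, -, hGi⟩ := hi.homotopyExtension Prop (ContinuousMap.const B False) ⟨_, hH⟩
    fun a => by simp
  refine isOpen_induced_iff.2 ⟨{b | G (b, 1)}, continuous_Prop.1 (by fun_prop), ?_⟩
  ext a
  simp [hGi]

lemma IsCofibration.isEmbedding [T0Space A] (hi : IsCofibration.{v} i) : IsEmbedding i :=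
  ⟨hi.isInducing, hi.isInducing.injective⟩

lemma IsCofibration.exists_retraction_cylinder [Small.{v} B] (hi : IsCofibration.{v} i) :
    ∃ R : C(B × I, B × I), (∀ p, (R p).1 ∈ range i ∨ (R p).2 = 0) ∧
      (∀ b, R (b, 0) = (b, 0)) ∧ ∀ a t, R (i a, t) = (i a, t) := by
  obtain ⟨G, hG0, hGi⟩ := hi.homotopyExtension {p : B × I // p.1 ∈ range i ∨ p.2 = 0}
    ⟨fun b => ⟨(b, 0), .inr rfl⟩, by fun_prop⟩
    ⟨fun p => ⟨(i p.1, p.2), .inl ⟨p.1, rfl⟩⟩, by fun_prop⟩ fun _ => rfl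
  exact ⟨(⟨Subtype.val, continuous_subtype_val⟩ : C(_, B × I)).comp G, fun p => (G p).2,
    fun b => congrArg Subtype.val (hG0 b), fun a t => congrArg Subtype.val (hGi a t)⟩

lemma IsCofibration.of_isLowerRetraction [AlexandrovDiscrete B] (hi : IsEmbedding i) {r : B → B}
    (hr : IsLowerRetraction univ (range i) r) : IsCofibration.{v} i := by
  classical
  have hrc : Continuous r :=
    continuous_of_specializes_map fun y z h => hr.monotoneOn y trivial z trivial h
  let q : B → A := fun b => hi.toHomeomorph.symm ⟨r b, hr.mapsTo trivial⟩
  have hqc : Continuous q := hi.toHomeomorph.symm.continuous.comp (hrc.subtype_mk _)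
  have hiq (b : B) : i (q b) = r b :=
    congrArg Subtype.val (hi.toHomeomorph.apply_symm_apply ⟨r b, hr.mapsTo trivial⟩)
  have hqi (a : A) : q (i a) = a := by
    simp only [q, hr.eqOn ⟨a, rfl⟩, id]
    exact hi.toHomeomorph_symm_apply a
  intro Z _ g H hH
  have hG : Continuous fun p : B × I => if p.2 = 0 then g p.1 else H (q p.1, p.2) := by
    refine .of_specializes_on_isClosed (C := {p : B × I | p.2 = 0})
      (F := fun p => H (q p.1, p.2)) (isClosed_eq continuous_snd continuous_const) (by fun_prop)
      ((g.continuous.comp continuous_fst).continuousOn.congr fun p (hp : p.2 = 0) => if_pos hp)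
      (fun p (hp : p.2 ≠ 0) => if_neg hp) fun p (hp : p.2 = 0) => ?_
    rw [if_pos hp, hp, hH, hiq]
    exact (hr.specializes p.1 trivial).map g.continuous
  refine ⟨⟨_, hG⟩, fun b => if_pos rfl, fun a t => ?_⟩
  by_cases ht : t = 0
  · simp [ht, hH]
  · simp [ht, hqi]

end Cofibration

lemma exists_isLowerRetraction_of_cylinder {Y : Type*} [TopologicalSpace Y] [Finite Y]
    [ConnectedSpace Y] {A : Set Y} (hA : A.Nonempty) (R : C(Y × I, Y × I))
    (hRA : ∀ p, (R p).1 ∈ A ∨ (R p).2 = 0) (hR0 : ∀ y, R (y, 0) = (y, 0))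
    (hRfix : ∀ a ∈ A, ∀ t, R (a, t) = (a, t)) : ∃ r, IsLowerRetraction univ A r := by
  obtain ⟨a, ha⟩ := hA
  have hheight (y : Y) (t : I) : (R (y, t)).2 = t := by
    have hlc : IsLocallyConstant fun y => (R (y, t)).2 :=
      (by fun_prop : Continuous fun y => (R (y, t)).2).isLocallyConstant_of_t1Space
    rw [hlc.apply_eq_of_preconnectedSpace y a, hRfix a ha]
  have hnear (y : Y) : ∀ᶠ t in 𝓝 (0 : I), (R (y, t)).1 ⤳ y := by
    have : Tendsto (fun t => (R (y, t)).1) (𝓝 0) (𝓝 y) := by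
      simpa [hR0] using (by fun_prop : Continuous fun t : I => (R (y, t)).1).tendsto 0
    exact this.eventually (eventually_specializes_nhds y)
  obtain ⟨t, hbelow, ht⟩ : ∃ t : I, (∀ y, (R (y, t)).1 ⤳ y) ∧ t ≠ 0 :=
    ((eventually_all.2 hnear).filter_mono nhdsWithin_le_nhds |>.and
      (eventually_mem_nhdsWithin (s := {0}ᶜ))).exists
  refine ⟨fun y => (R (y, t)).1, subset_univ A, fun y _ => ?_, fun a ha => by simp [hRfix a ha],
    fun y _ => hbelow y, fun y _ z _ hyz => hyz.map (f := fun y => (R (y, t)).1) (by fun_prop)⟩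
  exact (hRA (y, t)).resolve_right (by rw [hheight]; exact ht)

theorem cofibration_iff_embedding_and_range_dbpRetract_general
    {X : Type u} {Y : Type u} [TopologicalSpace X] [TopologicalSpace Y]
    [T0Space X] [Finite Y] [T0Space Y] [ConnectedSpace Y] [Nonempty X]
    (f : C(X, Y)) :
    IsCofibration f ↔
      Topology.IsEmbedding ⇑f ∧ IsDbpRetract (Set.univ : Set Y) (Set.range ⇑f) := by
  constructor
  · intro hf
    obtain ⟨R, hRf, hR0, hRi⟩ := hf.exists_retraction_cylinder
    obtain ⟨r, hr⟩ := exists_isLowerRetraction_of_cylinder (range_nonempty f) R hRf hR0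
      (by rintro _ ⟨x, rfl⟩ t; exact hRi x t)
    exact ⟨hf.isEmbedding, hr.isDbpRetract⟩
  · rintro ⟨hf, hret⟩
    obtain ⟨r, hr⟩ := hret.exists_isLowerRetraction
    exact .of_isLowerRetraction hf hr

/-- Let `X` and `Y` be finite T₀-spaces with `Y` connected and `X`
non-empty, and `f : X → Y` continuous. Then `f` is a Hurewicz cofibration iff `f` is a
homeomorphism onto its image (an embedding) and `f(X)` is a dbp–retract of `Y`. -/
theorem cofibration_iff_embedding_and_range_dbpRetract
    {X : Type u} {Y : Type u} [TopologicalSpace X] [TopologicalSpace Y]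
    [Finite X] [T0Space X] [Finite Y] [T0Space Y] [ConnectedSpace Y] [Nonempty X]
    (f : C(X, Y)) :
    IsCofibration f ↔
      Topology.IsEmbedding ⇑f ∧ IsDbpRetract (Set.univ : Set Y) (Set.range ⇑f) :=
  cofibration_iff_embedding_and_range_dbpRetract_general f
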